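/- arXiv:math/0312422 — 2 statements merged into one kernel-verified Lean document; each statement's English description precedes it below -/
import Mathlib

section
/- Let T be a set with a reduction relation ⟹ and a symmetric equation relation ≡, and let λ assign to every individual ⟹-step and every ≡-step an element of a well-ordered set (W, ≺). Suppose that whenever the one or two steps of a local divergence are replaced by the steps of a corresponding convergence (in the sense of local confluence modulo equations), the multiset of λ-values of the divergence's steps is strictly greater than the multiset of λ-values of the convergence's steps in the Dershowitz–Manna multiset ordering induced by ≺. Then the system is confluent modulo equations if and only if it is locally confluent modulo equations. -/
/-!
STATEMENT 0: Abstract rewriting system with a reduction relation `R` (⟹) and a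
symmetric equation relation `E` (≡), with a measure `λ` on individual steps
valued in a well-ordered set.  If replacing the steps of any local divergence
by the steps of any corresponding convergence strictly decreases the
Dershowitz–Manna multiset of measures, then the system is confluent modulo
equations iff it is locally confluent modulo equations.
-/

namespace Stmt0

variable {T W : Type*}

/-- Dershowitz–Manna multiset ordering induced by `prec`: `N` is strictly below `M`. -/
def DMlt [DecidableEq W] (prec : W → W → Prop) (N M : Multiset W) : Prop :=
  ∃ X Y : Multiset W, X ≠ 0 ∧ X ≤ M ∧ N = M - X + Y ∧ ∀ y ∈ Y, ∃ x ∈ X, prec y x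

/-- Mixed sequences of reduction steps (`R`) and equation steps (`E`). -/
inductive Path (R E : T → T → Prop) : T → T → Type _ where
  | nil (t : T) : Path R E t t
  | red (a b c : T) : R a b → Path R E b c → Path R E a c
  | eq (a b c : T) : E a b → Path R E b c → Path R E a c

/-- The multiset of `λ`-values of the steps of a mixed sequence, where `lamR`
assigns a measure to each reduction step and `lamE` to each equation step. -/
def Path.measure {R E : T → T → Prop} (lamR lamE : T → T → W) :
    {s t : T} → Path R E s t → Multiset W
  | _, _, .nil _ => 0
  | _, _, .red a b _ _ p => lamR a b ::ₘ Path.measure lamR lamE p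
  | _, _, .eq a b _ _ p => lamE a b ::ₘ Path.measure lamR lamE p

/-- A single step of a chain connecting two terms: a reduction step, a reversed
reduction step, or an equation step. -/
def MixedStep (R E : T → T → Prop) (a b : T) : Prop := R a b ∨ R b a ∨ E a b

/-- Confluence modulo equations: whenever `t` and `s` are connected by a finite
chain of reduction steps, reversed reduction steps and equation steps, they have
reducts connected by equation steps alone. -/
def ConfluentModulo (R E : T → T → Prop) : Prop :=
  ∀ t s : T, Relation.ReflTransGen (MixedStep R E) t s →
    ∃ t₁ s₁ : T, Relation.ReflTransGen R t t₁ ∧ Relation.ReflTransGen R s s₁ ∧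
      Relation.ReflTransGen E t₁ s₁

/-- Local confluence modulo equations. -/
def LocallyConfluentModulo (R E : T → T → Prop) : Prop :=
  (∀ t₀ t₁ t₂ : T, R t₀ t₁ → R t₀ t₂ →
    ∃ u, Nonempty (Path R E t₁ u) ∧ Nonempty (Path R E t₂ u)) ∧
  (∀ t₀ t₁ t₂ : T, R t₀ t₁ → E t₀ t₂ →
    ∃ u t₂', Nonempty (Path R E t₁ u) ∧ R t₂ t₂' ∧ Nonempty (Path R E t₂' u))

/-!
Confluence modulo equations amounts to turning every conversion `t ↔* s` into a valley
`t ⟹* · ≡* · ⟸* s`. A conversion that is not a valley contains a peak `⟸ ⟹` or a cliff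
`⟸ ≡` / `≡ ⟹`; replacing it by the convergence given by local confluence strictly decreases
the multiset of labels of the conversion in the multiset extension of `≺`, which is
well founded. The decrease hypotheses are stated for paths only, so a conversion charges an
equation step with the labels of both of its orientations, and the paths fed to the hypotheses
are padded so that their measure covers both. Conversely, local confluence follows from
confluence; the reduction step required at `t₂` in a cliff exists because otherwise the
conversion closes into a cycle through `t₀ ⟹ t₁`, which the decrease of peaks forbids.
-/

open Relation Multiset

section CutExpand

variable {r : W → W → Prop}

theorem transGen_cutExpand_cons_cons (x : W) {N M : Multiset W}
    (h : TransGen (CutExpand r) N M) : TransGen (CutExpand r) (x ::ₘ N) (x ::ₘ M) := by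
  simpa only [Function.onFun, Multiset.singleton_add] using
    h.lift (({x} : Multiset W) + ·) fun _ _ => (cutExpand_add_left {x}).2

theorem reflTransGen_cutExpand_of_le {N M : Multiset W} (h : N ≤ M) :
    ReflTransGen (CutExpand r) N M := by
  obtain ⟨D, rfl⟩ := Multiset.le_iff_exists_add.1 h
  induction D using Multiset.induction with
  | empty => simpa using ReflTransGen.refl
  | cons d D ih =>
    refine (ih (le_add_right le_rfl)).tail ⟨0, d, by simp, ?_⟩
    rw [add_zero, add_cons, add_comm, Multiset.singleton_add]

theorem transGen_cutExpand_of_forall_exists_rel {a : W} {X Y : Multiset W}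
    (hY : ∀ y ∈ Y, ∃ x ∈ a ::ₘ X, r y x) : TransGen (CutExpand r) Y (a ::ₘ X) := by
  classical
  induction X using Multiset.induction generalizing a Y with
  | empty => exact .single (cutExpand_singleton fun y hy => by simpa using hY y hy)
  | cons b X ih =>
    have hrest : TransGen (CutExpand r) (Y.filter (¬ r · a)) (b ::ₘ X) := ih fun y hy => by
      obtain ⟨hyY, hya⟩ := mem_filter.1 hy
      obtain ⟨x, hx, hyx⟩ := hY y hyY
      rcases mem_cons.1 hx with rfl | hx
      · exact absurd hyx hya
      · exact ⟨x, hx, hyx⟩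
    have hlast : CutExpand r (Y.filter (r · a) + b ::ₘ X) (a ::ₘ b ::ₘ X) := by
      rw [← singleton_add a]
      exact (cutExpand_add_right _).2 (cutExpand_singleton fun y hy => (mem_filter.1 hy).2)
    rw [← filter_add_not (r · a) Y]
    exact (hrest.lift _ fun _ _ => (cutExpand_add_left _).2).tail hlast

variable [DecidableEq W]

theorem transGen_cutExpand_of_dmlt {N M : Multiset W} (h : DMlt r N M) :
    TransGen (CutExpand r) N M := by
  obtain ⟨X, Y, hX, hXM, rfl, hY⟩ := h
  obtain ⟨a, ha⟩ := exists_mem_of_ne_zero hX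
  obtain ⟨X, rfl⟩ := exists_cons_of_mem ha
  have := (transGen_cutExpand_of_forall_exists_rel hY).lift (M - a ::ₘ X + ·)
    fun _ _ => (cutExpand_add_left _).2
  rwa [Function.onFun, tsub_add_cancel_of_le hXM] at this

theorem transGen_cutExpand_add_of_dmlt {N M N' M' : Multiset W} (h : DMlt r N M) (hN : N' ≤ N)
    (hM : M ≤ M') (C : Multiset W) : TransGen (CutExpand r) (N' + C) (M' + C) := by
  have hNM := TransGen.trans_right (reflTransGen_cutExpand_of_le hN) (transGen_cutExpand_of_dmlt h)
  exact (hNM.trans_left (reflTransGen_cutExpand_of_le hM)).lift (· + C) fun _ _ =>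
    (cutExpand_add_right C).2

theorem not_dmlt_of_le [IsWellFounded W r] {N M : Multiset W} (h : M ≤ N) : ¬ DMlt r N M :=
  fun hNM => ((IsWellFounded.wf (r := r)).cutExpand.transGen.irrefl).irrefl N
    ((transGen_cutExpand_of_dmlt hNM).trans_left (reflTransGen_cutExpand_of_le h))

end CutExpand

inductive Chain (R E : T → T → Prop) : T → T → Type _ where
  | nil (a : T) : Chain R E a a
  | fwd (a b c : T) : R a b → Chain R E b c → Chain R E a c
  | bwd (a b c : T) : R b a → Chain R E b c → Chain R E a c
  | eq (a b c : T) : E a b → Chain R E b c → Chain R E a c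

def JoinableModulo (R E : T → T → Prop) (a b : T) : Prop :=
  ∃ a' b', ReflTransGen R a a' ∧ ReflTransGen R b b' ∧ ReflTransGen E a' b'

variable {R E : T → T → Prop}

namespace Chain

/-- An equation step `a ≡ b` is charged with both `lamE a b` and `lamE b a`: reversing a path
turns it into the step `b ≡ a`. -/
def measure (lamR lamE : T → T → W) : {a b : T} → Chain R E a b → Multiset W
  | _, _, .nil _ => 0
  | _, _, .fwd a b _ _ p => lamR a b ::ₘ p.measure lamR lamE
  | _, _, .bwd a b _ _ p => lamR b a ::ₘ p.measure lamR lamE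
  | _, _, .eq a b _ _ p => lamE a b ::ₘ lamE b a ::ₘ p.measure lamR lamE

def append : {a b c : T} → Chain R E a b → Chain R E b c → Chain R E a c
  | _, _, _, .nil _, q => q
  | _, _, _, .fwd a b _ h p, q => .fwd a b _ h (p.append q)
  | _, _, _, .bwd a b _ h p, q => .bwd a b _ h (p.append q)
  | _, _, _, .eq a b _ h p, q => .eq a b _ h (p.append q)

theorem measure_append (lamR lamE : T → T → W) {a b c : T} (p : Chain R E a b)
    (q : Chain R E b c) :
    (p.append q).measure lamR lamE = p.measure lamR lamE + q.measure lamR lamE := by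
  induction p with
  | nil => simp [append, measure]
  | _ => simp [append, measure, *]

theorem nonempty_of_reflTransGen {a b : T} (h : ReflTransGen (MixedStep R E) a b) :
    Nonempty (Chain R E a b) := by
  induction h using ReflTransGen.head_induction_on with
  | refl => exact ⟨.nil _⟩
  | head hstep _ ih =>
    obtain ⟨c⟩ := ih
    rcases hstep with h | h | h
    exacts [⟨.fwd _ _ _ h c⟩, ⟨.bwd _ _ _ h c⟩, ⟨.eq _ _ _ h c⟩]

inductive IsBwds : {a b : T} → Chain R E a b → Prop
  | nil (a : T) : IsBwds (.nil a)
  | bwd {a b c : T} (h : R b a) {p : Chain R E b c} : IsBwds p → IsBwds (.bwd a b c h p)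

inductive IsEqsBwds : {a b : T} → Chain R E a b → Prop
  | ofIsBwds {a b : T} {p : Chain R E a b} : IsBwds p → IsEqsBwds p
  | eq {a b c : T} (h : E a b) {p : Chain R E b c} : IsEqsBwds p → IsEqsBwds (.eq a b c h p)

/-- A valley `a ⟹* · ≡* · ⟸* b`. -/
inductive IsValley : {a b : T} → Chain R E a b → Prop
  | ofIsEqsBwds {a b : T} {p : Chain R E a b} : IsEqsBwds p → IsValley p
  | fwd {a b c : T} (h : R a b) {p : Chain R E b c} : IsValley p → IsValley (.fwd a b c h p)

theorem IsBwds.reflTransGen {a b : T} {p : Chain R E a b} (hp : IsBwds p) :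
    ReflTransGen R b a := by
  induction hp with
  | nil => exact .refl
  | bwd h _ ih => exact ih.tail h

theorem IsEqsBwds.exists_reflTransGen {a b : T} {p : Chain R E a b} (hp : IsEqsBwds p) :
    ∃ m, ReflTransGen E a m ∧ ReflTransGen R b m := by
  induction hp with
  | ofIsBwds hp => exact ⟨_, .refl, hp.reflTransGen⟩
  | eq h _ ih =>
    obtain ⟨m, hE, hR⟩ := ih
    exact ⟨m, hE.head h, hR⟩

theorem IsValley.joinableModulo {a b : T} {p : Chain R E a b} (hp : IsValley p) :
    JoinableModulo R E a b := by
  induction hp with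
  | ofIsEqsBwds hp =>
    obtain ⟨m, hE, hR⟩ := hp.exists_reflTransGen
    exact ⟨_, m, .refl, hR, hE⟩
  | fwd h _ ih =>
    obtain ⟨a', b', ha, hb, hE⟩ := ih
    exact ⟨a', b', ha.head h, hb, hE⟩

end Chain

namespace Path

def append : {a b c : T} → Path R E a b → Path R E b c → Path R E a c
  | _, _, _, .nil _, q => q
  | _, _, _, .red a b _ h p, q => .red a b _ h (p.append q)
  | _, _, _, .eq a b _ h p, q => .eq a b _ h (p.append q)

theorem measure_append (lamR lamE : T → T → W) {a b c : T} (p : Path R E a b)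
    (q : Path R E b c) :
    (p.append q).measure lamR lamE = p.measure lamR lamE + q.measure lamR lamE := by
  induction p with
  | nil => simp [append, Path.measure]
  | _ => simp [append, Path.measure, *]

theorem nonempty_of_reflTransGen {S : T → T → Prop} (hS : ∀ a b, S a b → R a b ∨ E a b)
    {a b : T} (h : ReflTransGen S a b) : Nonempty (Path R E a b) := by
  induction h using ReflTransGen.head_induction_on with
  | refl => exact ⟨.nil _⟩
  | head hstep _ ih =>
    obtain ⟨p⟩ := ih
    rcases hS _ _ hstep with h | h
    exacts [⟨.red _ _ _ h p⟩, ⟨.eq _ _ _ h p⟩]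

def toChain : {a b : T} → Path R E a b → Chain R E a b
  | _, _, .nil a => .nil a
  | _, _, .red a b c h p => .fwd a b c h p.toChain
  | _, _, .eq a b c h p => .eq a b c h p.toChain

def reverse (hsymm : ∀ a b, E a b → E b a) : {a b : T} → Path R E a b → Chain R E b a
  | _, _, .nil a => .nil a
  | _, _, .red a b _ h p => (p.reverse hsymm).append (.bwd b a a h (.nil a))
  | _, _, .eq a b _ h p => (p.reverse hsymm).append (.eq b a a (hsymm a b h) (.nil a))

/-- The decrease hypotheses hold for all paths, in particular for these padded ones, whose
measure dominates that of `toChain` and of `reverse`. -/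
def tripleEqs (hsymm : ∀ a b, E a b → E b a) : {a b : T} → Path R E a b → Path R E a b
  | _, _, .nil a => .nil a
  | _, _, .red a b c h p => .red a b c h (p.tripleEqs hsymm)
  | _, _, .eq a b c h p =>
    .eq a b c h (.eq b a c (hsymm a b h) (.eq a b c h (p.tripleEqs hsymm)))

variable (lamR lamE : T → T → W) (hsymm : ∀ a b, E a b → E b a)

theorem measure_reverse {a b : T} (p : Path R E a b) :
    (p.reverse hsymm).measure lamR lamE = p.toChain.measure lamR lamE := by
  induction p with
  | nil => rfl
  | _ => simp [reverse, toChain, Chain.measure, Chain.measure_append, *, add_comm, cons_swap]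

theorem measure_toChain_le {a b : T} (p : Path R E a b) :
    p.toChain.measure lamR lamE ≤ (p.tripleEqs hsymm).measure lamR lamE := by
  induction p with
  | nil => rfl
  | red a b c h p ih => exact cons_le_cons _ ih
  | eq a b c h p ih => exact cons_le_cons _ (cons_le_cons _ (ih.trans (le_cons_self _ _)))

theorem measure_reverse_le {a b : T} (p : Path R E a b) :
    (p.reverse hsymm).measure lamR lamE ≤ (p.tripleEqs hsymm).measure lamR lamE :=
  measure_reverse lamR lamE hsymm p ▸ measure_toChain_le lamR lamE hsymm p

end Path

theorem ConfluentModulo.exists_path_reflTransGen (h : ConfluentModulo R E) {t s : T}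
    (hts : ReflTransGen (MixedStep R E) t s) :
    ∃ u, Nonempty (Path R E t u) ∧ ReflTransGen R s u := by
  obtain ⟨t', s', ht, hs, hE⟩ := h t s hts
  obtain ⟨pt⟩ := Path.nonempty_of_reflTransGen (fun _ _ => Or.inl) ht
  obtain ⟨pE⟩ := Path.nonempty_of_reflTransGen (fun _ _ => Or.inr) hE
  exact ⟨s', ⟨pt.append pE⟩, hs⟩

section Decreasing

variable [DecidableEq W]

def PeaksDecrease (R E : T → T → Prop) (prec : W → W → Prop) (lamR lamE : T → T → W) : Prop :=
  ∀ t₀ t₁ t₂ u, R t₀ t₁ → R t₀ t₂ → ∀ (p₁ : Path R E t₁ u) (p₂ : Path R E t₂ u),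
    DMlt prec (p₁.measure lamR lamE + p₂.measure lamR lamE) {lamR t₀ t₁, lamR t₀ t₂}

def CliffsDecrease (R E : T → T → Prop) (prec : W → W → Prop) (lamR lamE : T → T → W) : Prop :=
  ∀ t₀ t₁ t₂ t₂' u, R t₀ t₁ → E t₀ t₂ → R t₂ t₂' →
    ∀ (p₁ : Path R E t₁ u) (p₂ : Path R E t₂' u),
      DMlt prec (p₁.measure lamR lamE + (lamR t₂ t₂' ::ₘ p₂.measure lamR lamE))
        {lamR t₀ t₁, lamE t₀ t₂}

variable {prec : W → W → Prop} {lamR lamE : T → T → W}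

/-- Both sides of the peak `t₁ ⟸ t₀ ⟹ t₁` may be closed by the cycle through `t₀ ⟹ t₁`, whose
doubled measure would then lie below `{lamR t₀ t₁, lamR t₀ t₁}` while containing it. -/
theorem PeaksDecrease.not_red_of_path [IsWellFounded W prec]
    (hRR : PeaksDecrease R E prec lamR lamE) {t₀ t₁ : T} (p : Path R E t₁ t₀) : ¬ R t₀ t₁ := by
  intro h
  set L := p.append (.red t₀ t₁ t₁ h (.nil t₁))
  have hmem : lamR t₀ t₁ ∈ L.measure lamR lamE := by
    simp [L, Path.measure_append, Path.measure]
  refine not_dmlt_of_le ?_ (hRR t₀ t₁ t₁ t₁ h h L L)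
  simpa using add_le_add (singleton_le.2 hmem) (singleton_le.2 hmem)

theorem ConfluentModulo.locallyConfluentModulo [IsWellFounded W prec]
    (hsymm : ∀ a b, E a b → E b a) (hRR : PeaksDecrease R E prec lamR lamE)
    (h : ConfluentModulo R E) : LocallyConfluentModulo R E := by
  refine ⟨fun t₀ t₁ t₂ h₁ h₂ => ?_, fun t₀ t₁ t₂ h₁ h₂ => ?_⟩
  · obtain ⟨u, hp, hu⟩ :=
      h.exists_path_reflTransGen (.head (Or.inr (Or.inl h₁)) (.single (Or.inl h₂)))
    exact ⟨u, hp, Path.nonempty_of_reflTransGen (fun _ _ => Or.inl) hu⟩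
  · obtain ⟨u, ⟨p⟩, hu⟩ :=
      h.exists_path_reflTransGen (.head (Or.inr (Or.inl h₁)) (.single (Or.inr (Or.inr h₂))))
    rcases hu.cases_head with rfl | ⟨t₂', h₂', hu'⟩
    · exact absurd h₁ (hRR.not_red_of_path (p.append (.eq _ _ _ (hsymm _ _ h₂) (.nil _))))
    · exact ⟨u, t₂', ⟨p⟩, h₂', Path.nonempty_of_reflTransGen (fun _ _ => Or.inl) hu'⟩

namespace Chain

theorem exists_lt_of_peak (hsymm : ∀ a b, E a b → E b a) (hlc : LocallyConfluentModulo R E)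
    (hRR : PeaksDecrease R E prec lamR lamE) {a b z s : T} (hba : R b a) (hbz : R b z)
    (p : Chain R E z s) :
    ∃ c : Chain R E a s, TransGen (CutExpand prec) (c.measure lamR lamE)
      ((Chain.bwd a b s hba (.fwd b z s hbz p)).measure lamR lamE) := by
  obtain ⟨u, ⟨pa⟩, ⟨pz⟩⟩ := hlc.1 b a z hba hbz
  refine ⟨pa.toChain.append ((pz.reverse hsymm).append p), ?_⟩
  convert transGen_cutExpand_add_of_dmlt
    (hRR b a z u hba hbz (pa.tripleEqs hsymm) (pz.tripleEqs hsymm))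
    (add_le_add (pa.measure_toChain_le lamR lamE hsymm) (pz.measure_reverse_le lamR lamE hsymm))
    le_rfl (p.measure lamR lamE) using 1
  · simp [measure_append, add_assoc]
  · simp [measure]

theorem exists_lt_of_eq_fwd (hsymm : ∀ a b, E a b → E b a) (hlc : LocallyConfluentModulo R E)
    (hRE : CliffsDecrease R E prec lamR lamE) {a b b' s : T} (hab : E a b) (hbb' : R b b')
    (p : Chain R E b' s) :
    ∃ c : Chain R E a s, TransGen (CutExpand prec) (c.measure lamR lamE)
      ((Chain.eq a b s hab (.fwd b b' s hbb' p)).measure lamR lamE) := by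
  obtain ⟨u, a', ⟨pb⟩, haa', ⟨pa⟩⟩ := hlc.2 b b' a hbb' (hsymm a b hab)
  refine ⟨.fwd a a' s haa' (pa.toChain.append ((pb.reverse hsymm).append p)), ?_⟩
  convert transGen_cutExpand_add_of_dmlt
    (hRE b b' a a' u hbb' (hsymm a b hab) haa' (pb.tripleEqs hsymm) (pa.tripleEqs hsymm))
    (add_le_add (pb.measure_reverse_le lamR lamE hsymm)
      (cons_le_cons _ (pa.measure_toChain_le lamR lamE hsymm)))
    (le_cons_self _ (lamE a b)) (p.measure lamR lamE) using 1
  · simp [measure, measure_append, add_assoc, add_comm]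
  · simp [measure, cons_swap]

theorem exists_lt_of_bwd_eq (hsymm : ∀ a b, E a b → E b a) (hlc : LocallyConfluentModulo R E)
    (hRE : CliffsDecrease R E prec lamR lamE) {a b z s : T} (hba : R b a) (hbz : E b z)
    (p : Chain R E z s) :
    ∃ c : Chain R E a s, TransGen (CutExpand prec) (c.measure lamR lamE)
      ((Chain.bwd a b s hba (.eq b z s hbz p)).measure lamR lamE) := by
  obtain ⟨u, z', ⟨pa⟩, hzz', ⟨pz⟩⟩ := hlc.2 b a z hba hbz
  refine ⟨pa.toChain.append ((pz.reverse hsymm).append (.bwd z' z s hzz' p)), ?_⟩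
  convert transGen_cutExpand_add_of_dmlt
    (hRE b a z z' u hba hbz hzz' (pa.tripleEqs hsymm) (pz.tripleEqs hsymm))
    (add_le_add (pa.measure_toChain_le lamR lamE hsymm)
      (cons_le_cons _ (pz.measure_reverse_le lamR lamE hsymm)))
    (le_cons_self _ (lamE z b)) (p.measure lamR lamE) using 1
  · simp [measure, measure_append, add_assoc]
  · simp [measure, cons_swap]

theorem isValley_or_exists_lt (hsymm : ∀ a b, E a b → E b a) (hlc : LocallyConfluentModulo R E)
    (hRR : PeaksDecrease R E prec lamR lamE) (hRE : CliffsDecrease R E prec lamR lamE)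
    {t s : T} (c : Chain R E t s) :
    c.IsValley ∨ ∃ c' : Chain R E t s,
      TransGen (CutExpand prec) (c'.measure lamR lamE) (c.measure lamR lamE) := by
  induction c with
  | nil a => exact .inl (.ofIsEqsBwds (.ofIsBwds (.nil a)))
  | fwd a b s h p ih =>
    rcases ih with hp | ⟨p', hp'⟩
    · exact .inl (hp.fwd h)
    · exact .inr ⟨.fwd a b s h p', transGen_cutExpand_cons_cons _ hp'⟩
  | eq a b s h p ih =>
    rcases ih with (hp | ⟨_, _⟩) | ⟨p', hp'⟩
    · exact .inl (.ofIsEqsBwds (.eq h hp))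
    · exact .inr (exists_lt_of_eq_fwd hsymm hlc hRE h _ _)
    · exact .inr ⟨.eq a b s h p',
        transGen_cutExpand_cons_cons _ (transGen_cutExpand_cons_cons _ hp')⟩
  | bwd a b s h p ih =>
    rcases ih with ((hp | ⟨_, _⟩) | ⟨_, _⟩) | ⟨p', hp'⟩
    · exact .inl (.ofIsEqsBwds (.ofIsBwds (.bwd h hp)))
    · exact .inr (exists_lt_of_bwd_eq hsymm hlc hRE h _ _)
    · exact .inr (exists_lt_of_peak hsymm hlc hRR h _ _)
    · exact .inr ⟨.bwd a b s h p', transGen_cutExpand_cons_cons _ hp'⟩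

theorem exists_isValley [IsWellFounded W prec] (hsymm : ∀ a b, E a b → E b a)
    (hlc : LocallyConfluentModulo R E) (hRR : PeaksDecrease R E prec lamR lamE)
    (hRE : CliffsDecrease R E prec lamR lamE) {t s : T} (c : Chain R E t s) :
    ∃ v : Chain R E t s, v.IsValley := by
  have hwf := InvImage.wf (fun c : Chain R E t s => c.measure lamR lamE)
    (IsWellFounded.wf (r := prec)).cutExpand.transGen
  induction c using hwf.induction with
  | _ c ih =>
    rcases isValley_or_exists_lt hsymm hlc hRR hRE c with hc | ⟨c', hc'⟩
    exacts [⟨c, hc⟩, ih c' hc']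

end Chain

theorem LocallyConfluentModulo.confluentModulo [IsWellFounded W prec]
    (hsymm : ∀ a b, E a b → E b a) (hRR : PeaksDecrease R E prec lamR lamE)
    (hRE : CliffsDecrease R E prec lamR lamE) (h : LocallyConfluentModulo R E) :
    ConfluentModulo R E := fun t s hts => by
  obtain ⟨c⟩ := Chain.nonempty_of_reflTransGen hts
  obtain ⟨v, hv⟩ := c.exists_isValley hsymm h hRR hRE
  exact hv.joinableModulo

end Decreasing

theorem confluent_modulo_iff_locally_confluent_modulo
    (R E : T → T → Prop) (hsymm : ∀ a b, E a b → E b a)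
    (prec : W → W → Prop) [DecidableEq W] [IsWellOrder W prec]
    (lamR lamE : T → T → W)
    (hRR : ∀ (t₀ t₁ t₂ u : T), R t₀ t₁ → R t₀ t₂ →
      ∀ (p₁ : Path R E t₁ u) (p₂ : Path R E t₂ u),
        DMlt prec (p₁.measure lamR lamE + p₂.measure lamR lamE)
          {lamR t₀ t₁, lamR t₀ t₂})
    (hRE : ∀ (t₀ t₁ t₂ t₂' u : T), R t₀ t₁ → E t₀ t₂ → R t₂ t₂' →
      ∀ (p₁ : Path R E t₁ u) (p₂ : Path R E t₂' u),
        DMlt prec (p₁.measure lamR lamE + (lamR t₂ t₂' ::ₘ p₂.measure lamR lamE))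
          {lamR t₀ t₁, lamE t₀ t₂}) :
    ConfluentModulo R E ↔ LocallyConfluentModulo R E :=
  ⟨fun h => h.locallyConfluentModulo hsymm hRR,
    fun h => h.confluentModulo hsymm hRR hRE⟩

end Stmt0
end

section
/- The reduction relation ⟹ generated by the cut-elimination rewrites (1)–(12) on ΣΠ_A-terms is terminating (there is no infinite sequence of reductions), and every ΣΠ_A-term t reduces, t ⟹* t', to a term t' in which the only cuts are essential, i.e. every cut subterm of t' is a cut of two atomic maps of A. -/
/-!
STATEMENT 2: The cut-elimination rewriting relation ⟹ on ΣΠ_A-terms is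
terminating, and every (well-typed) ΣΠ_A-term reduces to a term in which the
only cuts are essential, i.e. every cut subterm is a cut of atomic maps of `A`.
-/

namespace Stmt2

/-- ΣΠ-formulas over a set of atoms `At`: atoms, finite-family sums and
finite-family products (events are represented by positions in the list). -/
inductive Formula (At : Type) : Type where
  | atom : At → Formula At
  | sum : List (Formula At) → Formula At
  | prod : List (Formula At) → Formula At

/-- ΣΠ_A-terms: identities on atoms, atomic maps of the polycategory `A`
(elements of `Ax`), cotuples, tuples, projections, injections and cuts. -/
inductive Tm (Ax Chan : Type) : Type where
  | id : Chan → Chan → Tm Ax Chan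
  | ax : Ax → Tm Ax Chan
  | cot : Chan → List (Tm Ax Chan) → Tm Ax Chan
  | tup : Chan → List (Tm Ax Chan) → Tm Ax Chan
  | prj : Chan → ℕ → Tm Ax Chan → Tm Ax Chan
  | inj : Chan → ℕ → Tm Ax Chan → Tm Ax Chan
  | cut : Chan → Tm Ax Chan → Tm Ax Chan → Tm Ax Chan

variable {At Ax Chan : Type}

/-- The one-step cut-elimination rewrites (1)–(12), closed under all term
contexts. -/
inductive Red : Tm Ax Chan → Tm Ax Chan → Prop where
  | r1 (γ β : Chan) (f : Tm Ax Chan) : Red (.cut γ f (.id γ β)) f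
  | r2 (γ α : Chan) (g : Tm Ax Chan) : Red (.cut γ (.id α γ) g) g
  | r3 (γ α : Chan) (fs : List (Tm Ax Chan)) (g : Tm Ax Chan) :
      Red (.cut γ (.cot α fs) g) (.cot α (fs.map fun f => .cut γ f g))
  | r4 (γ β : Chan) (f : Tm Ax Chan) (gs : List (Tm Ax Chan)) :
      Red (.cut γ f (.tup β gs)) (.tup β (gs.map fun g => .cut γ f g))
  | r5 (γ α : Chan) (k : ℕ) (f g : Tm Ax Chan) : α ≠ γ →
      Red (.cut γ (.inj α k f) g) (.inj α k (.cut γ f g))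
  | r6 (γ β : Chan) (k : ℕ) (f g : Tm Ax Chan) : β ≠ γ →
      Red (.cut γ f (.prj β k g)) (.prj β k (.cut γ f g))
  | r7 (γ α : Chan) (k : ℕ) (f g : Tm Ax Chan) :
      Red (.cut γ (.prj α k f) g) (.prj α k (.cut γ f g))
  | r8 (γ β : Chan) (k : ℕ) (f g : Tm Ax Chan) :
      Red (.cut γ f (.inj β k g)) (.inj β k (.cut γ f g))
  | r9 (γ α : Chan) (fs : List (Tm Ax Chan)) (g : Tm Ax Chan) : α ≠ γ →
      Red (.cut γ (.tup α fs) g) (.tup α (fs.map fun f => .cut γ f g))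
  | r10 (γ β : Chan) (f : Tm Ax Chan) (gs : List (Tm Ax Chan)) : β ≠ γ →
      Red (.cut γ f (.cot β gs)) (.cot β (gs.map fun g => .cut γ f g))
  | r11 (γ : Chan) (k : ℕ) (f : Tm Ax Chan) (gs : List (Tm Ax Chan)) (hk : k < gs.length) :
      Red (.cut γ (.inj γ k f) (.cot γ gs)) (.cut γ f (gs.get ⟨k, hk⟩))
  | r12 (γ : Chan) (k : ℕ) (fs : List (Tm Ax Chan)) (g : Tm Ax Chan) (hk : k < fs.length) :
      Red (.cut γ (.tup γ fs) (.prj γ k g)) (.cut γ (fs.get ⟨k, hk⟩) g)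
  | cotC (α : Chan) (l r : List (Tm Ax Chan)) {f f' : Tm Ax Chan} :
      Red f f' → Red (.cot α (l ++ f :: r)) (.cot α (l ++ f' :: r))
  | tupC (α : Chan) (l r : List (Tm Ax Chan)) {f f' : Tm Ax Chan} :
      Red f f' → Red (.tup α (l ++ f :: r)) (.tup α (l ++ f' :: r))
  | prjC (α : Chan) (k : ℕ) {f f' : Tm Ax Chan} :
      Red f f' → Red (.prj α k f) (.prj α k f')
  | injC (α : Chan) (k : ℕ) {f f' : Tm Ax Chan} :
      Red f f' → Red (.inj α k f) (.inj α k f')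
  | cutL (γ : Chan) {f f' : Tm Ax Chan} (g : Tm Ax Chan) :
      Red f f' → Red (.cut γ f g) (.cut γ f' g)
  | cutR (γ : Chan) (f : Tm Ax Chan) {g g' : Tm Ax Chan} :
      Red g g' → Red (.cut γ f g) (.cut γ f g')
/-- A (two-sided, unordered) context: an assignment of formulas to
finitely many channel names. -/
abbrev Ctx (Chan At : Type) : Type := Chan → Option (Formula At)

variable [DecidableEq Chan]

/-- The singleton context `α : X`. -/
def Ctx.single (α : Chan) (X : Formula At) : Ctx Chan At :=
  fun c => if c = α then some X else none

/-- Extension of a context by `α : X` (to be used when `Γ α = none`). -/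
def Ctx.cons (Γ : Ctx Chan At) (α : Chan) (X : Formula At) : Ctx Chan At :=
  fun c => if c = α then some X else Γ c

/-- Disjointness of the supports of two contexts. -/
def Ctx.Disj (Γ Γ' : Ctx Chan At) : Prop := ∀ c, Γ c = none ∨ Γ' c = none

/-- Union of two (disjoint) contexts. -/
def Ctx.union (Γ Γ' : Ctx Chan At) : Ctx Chan At :=
  fun c => (Γ c).orElse fun _ => Γ' c

/-- Typing of ΣΠ_A-terms by sequents `Γ ⊢ Δ`, over a polycategory of atomic
maps `Ax` typed by `dA`/`cA`. -/
inductive HasType (dA cA : Ax → Ctx Chan At) :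
    Tm Ax Chan → Ctx Chan At → Ctx Chan At → Prop where
  | id (α β : Chan) (A : At) :
      HasType dA cA (.id α β) (Ctx.single α (.atom A)) (Ctx.single β (.atom A))
  | ax (a : Ax) : HasType dA cA (.ax a) (dA a) (cA a)
  | cot {Γ Δ : Ctx Chan At} {α : Chan} {Xs : List (Formula At)} {fs : List (Tm Ax Chan)}
      (hα : Γ α = none) (hlen : fs.length = Xs.length)
      (h : ∀ i : Fin fs.length,
        HasType dA cA (fs.get i) (Γ.cons α (Xs.get (Fin.cast hlen i))) Δ) :
      HasType dA cA (.cot α fs) (Γ.cons α (.sum Xs)) Δ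
  | tup {Γ Δ : Ctx Chan At} {α : Chan} {Xs : List (Formula At)} {fs : List (Tm Ax Chan)}
      (hα : Δ α = none) (hlen : fs.length = Xs.length)
      (h : ∀ i : Fin fs.length,
        HasType dA cA (fs.get i) Γ (Δ.cons α (Xs.get (Fin.cast hlen i)))) :
      HasType dA cA (.tup α fs) Γ (Δ.cons α (.prod Xs))
  | prj {Γ Δ : Ctx Chan At} {α : Chan} {Xs : List (Formula At)} {k : ℕ} {f : Tm Ax Chan}
      (hα : Γ α = none) (hk : k < Xs.length)
      (h : HasType dA cA f (Γ.cons α (Xs.get ⟨k, hk⟩)) Δ) :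
      HasType dA cA (.prj α k f) (Γ.cons α (.prod Xs)) Δ
  | inj {Γ Δ : Ctx Chan At} {α : Chan} {Xs : List (Formula At)} {k : ℕ} {f : Tm Ax Chan}
      (hα : Δ α = none) (hk : k < Xs.length)
      (h : HasType dA cA f Γ (Δ.cons α (Xs.get ⟨k, hk⟩))) :
      HasType dA cA (.inj α k f) Γ (Δ.cons α (.sum Xs))
  | cut {Γ Δ Γ' Δ' : Ctx Chan At} {γ : Chan} {Z : Formula At} {f g : Tm Ax Chan}
      (h1 : Ctx.Disj Γ Γ') (h2 : Ctx.Disj Δ Δ') (h3 : Δ γ = none) (h4 : Γ' γ = none)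
      (hf : HasType dA cA f Γ (Δ.cons γ Z)) (hg : HasType dA cA g (Γ'.cons γ Z) Δ') :
      HasType dA cA (.cut γ f g) (Γ.union Γ') (Δ.union Δ')

/-- Terms denoting (composites of) atomic maps of the polycategory `A`:
atomic maps, identities, and cuts of such. -/
inductive Atomic : Tm Ax Chan → Prop where
  | id (α β : Chan) : Atomic (.id α β)
  | ax (a : Ax) : Atomic (.ax a)
  | cut (γ : Chan) {f g : Tm Ax Chan} : Atomic f → Atomic g → Atomic (.cut γ f g)

/-- Every cut subterm is essential: a cut of (composites of) atomic maps. -/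
inductive OnlyEssentialCuts : Tm Ax Chan → Prop where
  | id (α β : Chan) : OnlyEssentialCuts (.id α β)
  | ax (a : Ax) : OnlyEssentialCuts (.ax a)
  | cot (α : Chan) {fs : List (Tm Ax Chan)} :
      (∀ f ∈ fs, OnlyEssentialCuts f) → OnlyEssentialCuts (.cot α fs)
  | tup (α : Chan) {fs : List (Tm Ax Chan)} :
      (∀ f ∈ fs, OnlyEssentialCuts f) → OnlyEssentialCuts (.tup α fs)
  | prj (α : Chan) (k : ℕ) {f : Tm Ax Chan} :
      OnlyEssentialCuts f → OnlyEssentialCuts (.prj α k f)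
  | inj (α : Chan) (k : ℕ) {f : Tm Ax Chan} :
      OnlyEssentialCuts f → OnlyEssentialCuts (.inj α k f)
  | cut (γ : Chan) {f g : Tm Ax Chan} :
      Atomic f → Atomic g → OnlyEssentialCuts (.cut γ f g)

/-
Termination: a cut weighs the product of the weights of its sides, any other constructor `2` plus
the weights of its subterms. As all weights are at least `2`, pushing a cut into a (co)tuple
lowers the weight, `2 + ∑ᵢ wᵢ * w < (2 + ∑ᵢ wᵢ) * w`, although it duplicates the other side.

Normal forms: a typed term either has only essential cuts or has a one-step reduct of the same
type, and well-founded induction along the reduction finishes the proof. Only rules (3)–(12) are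
used: (1) and (2) erase an identity without renaming its channel, so they do not preserve types.
A cut that no rule (3)–(12) applies to has on each side an atomic term or the introduction of
the cut channel; typing then forces the cut formula to be an atom, so both sides are atomic.
-/

section Termination

omit [DecidableEq Chan]

namespace Tm

def weight : Tm Ax Chan → ℕ
  | .id _ _ => 2
  | .ax _ => 2
  | .cot _ fs => 2 + (fs.map weight).sum
  | .tup _ fs => 2 + (fs.map weight).sum
  | .prj _ _ f => 2 + weight f
  | .inj _ _ f => 2 + weight f
  | .cut _ f g => weight f * weight g

theorem two_le_weight (t : Tm Ax Chan) : 2 ≤ t.weight := by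
  cases t with
  | cut _ f g => have := two_le_weight f; have := two_le_weight g; simp only [weight]; nlinarith
  | _ => simp [weight]

theorem weight_le_sum {f : Tm Ax Chan} {fs : List (Tm Ax Chan)} (h : f ∈ fs) :
    f.weight ≤ (fs.map weight).sum :=
  List.le_sum_of_mem (List.mem_map_of_mem h)

end Tm

open Tm in
theorem Red.weight_lt {t t' : Tm Ax Chan} (h : Red t t') : t'.weight < t.weight := by
  induction h with
  | r1 _ _ f => have := two_le_weight f; simp only [weight]; nlinarith
  | r2 _ _ g => have := two_le_weight g; simp only [weight]; nlinarith
  | r3 _ _ _ g | r9 _ _ _ g =>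
    have := two_le_weight g
    simp only [weight, List.map_map, Function.comp_def, List.sum_map_mul_right]; nlinarith
  | r4 _ _ f | r10 _ _ f =>
    have := two_le_weight f
    simp only [weight, List.map_map, Function.comp_def, List.sum_map_mul_left]; nlinarith
  | r5 _ _ _ _ g | r7 _ _ _ _ g => have := two_le_weight g; simp only [weight]; nlinarith
  | r6 _ _ _ f | r8 _ _ _ f => have := two_le_weight f; simp only [weight]; nlinarith
  | r11 _ k f gs hk =>
    have := weight_le_sum (List.get_mem gs ⟨k, hk⟩)
    have := two_le_weight f
    simp only [weight]; nlinarith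
  | r12 _ k fs g hk =>
    have := weight_le_sum (List.get_mem fs ⟨k, hk⟩)
    have := two_le_weight g
    simp only [weight]; nlinarith
  | cotC _ _ _ _ ih | tupC _ _ _ _ ih =>
    simp only [weight, List.map_append, List.map_cons, List.sum_append, List.sum_cons]; omega
  | prjC _ _ _ ih | injC _ _ _ ih => simp only [weight]; omega
  | cutL _ g _ ih => have := two_le_weight g; simp only [weight]; nlinarith
  | cutR _ f _ ih => have := two_le_weight f; simp only [weight]; nlinarith

theorem Red.wellFounded_flip : WellFounded (fun a b : Tm Ax Chan => Red b a) :=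
  Subrelation.wf (fun h => h.weight_lt) (measure Tm.weight).wf

end Termination

namespace Ctx

variable {Γ Γ' : Ctx Chan At} {α β c : Chan} {X Y : Formula At}

section

omit [DecidableEq Chan]

theorem union_apply_of_some (h : Γ c = some X) : Γ.union Γ' c = some X := by
  simp [Ctx.union, h]

theorem union_apply_of_none (h : Γ c = none) : Γ.union Γ' c = Γ' c := by
  simp [Ctx.union, h]

theorem Disj.right_eq_none (h : Γ.Disj Γ') (hc : Γ c = some X) : Γ' c = none :=
  (h c).resolve_left (by simp [hc])

theorem Disj.left_eq_none (h : Γ.Disj Γ') (hc : Γ' c = some X) : Γ c = none :=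
  (h c).resolve_right (by simp [hc])

end

@[simp]
theorem cons_apply_self : Γ.cons α X α = some X := by simp [Ctx.cons]

@[simp]
theorem cons_apply_of_ne (h : c ≠ α) : Γ.cons α X c = Γ c := by simp [Ctx.cons, h]

theorem cons_cons : (Γ.cons α X).cons α Y = Γ.cons α Y := by
  funext c; by_cases c = α <;> simp_all

theorem cons_comm (h : α ≠ β) : (Γ.cons α X).cons β Y = (Γ.cons β Y).cons α X := by
  funext c; by_cases c = α <;> by_cases c = β <;> simp_all

theorem cons_union : (Γ.cons α X).union Γ' = (Γ.union Γ').cons α X := by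
  funext c; by_cases c = α <;> simp_all [Ctx.union]

theorem union_cons (h : Γ α = none) : Γ.union (Γ'.cons α X) = (Γ.union Γ').cons α X := by
  funext c; by_cases c = α <;> simp_all [Ctx.union]

theorem Disj.cons_left (h : Γ.Disj Γ') (hα : Γ' α = none) : (Γ.cons α X).Disj Γ' := by
  intro c; by_cases c = α <;> simp_all [h c]

theorem Disj.cons_right (h : Γ.Disj Γ') (hα : Γ α = none) : Γ.Disj (Γ'.cons α X) := by
  intro c; by_cases c = α <;> simp_all [h c]

theorem exists_cons_eq (h : Γ α = some X) : ∃ Γ₀ : Ctx Chan At, Γ₀ α = none ∧ Γ₀.cons α X = Γ :=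
  ⟨Function.update Γ α none, by simp, by funext c; by_cases c = α <;> simp_all⟩

end Ctx

theorem _root_.List.forall₂_iff_get_cast {α β : Type*} {R : α → β → Prop} {l₁ : List α}
    {l₂ : List β} : List.Forall₂ R l₁ l₂ ↔
      ∃ h : l₁.length = l₂.length, ∀ i : Fin l₁.length, R (l₁.get i) (l₂.get (Fin.cast h i)) :=
  List.forall₂_iff_get.trans ⟨fun ⟨h, hR⟩ => ⟨h, fun i => hR i _ _⟩,
    fun ⟨h, hR⟩ => ⟨h, fun i h₁ _ => hR ⟨i, h₁⟩⟩⟩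

namespace HasType

variable {dA cA : Ax → Ctx Chan At} {Γ Δ : Ctx Chan At} {α β γ : Chan} {k : ℕ}
  {f g : Tm Ax Chan} {fs gs : List (Tm Ax Chan)}

theorem cot_iff : HasType dA cA (.cot α fs) Γ Δ ↔ ∃ Xs, Γ α = some (.sum Xs) ∧
    List.Forall₂ (fun f X => HasType dA cA f (Γ.cons α X) Δ) fs Xs := by
  constructor
  · intro h
    cases h with
    | cot _ hlen h =>
      exact ⟨_, Ctx.cons_apply_self,
        List.forall₂_iff_get_cast.2 ⟨hlen, fun i => by simpa only [Ctx.cons_cons] using h i⟩⟩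
  · rintro ⟨Xs, hα, h⟩
    obtain ⟨Γ₀, hΓ₀, rfl⟩ := Ctx.exists_cons_eq hα
    obtain ⟨hlen, h⟩ := List.forall₂_iff_get_cast.1 h
    exact cot hΓ₀ hlen fun i => by simpa only [Ctx.cons_cons] using h i

theorem tup_iff : HasType dA cA (.tup α fs) Γ Δ ↔ ∃ Xs, Δ α = some (.prod Xs) ∧
    List.Forall₂ (fun f X => HasType dA cA f Γ (Δ.cons α X)) fs Xs := by
  constructor
  · intro h
    cases h with
    | tup _ hlen h =>
      exact ⟨_, Ctx.cons_apply_self,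
        List.forall₂_iff_get_cast.2 ⟨hlen, fun i => by simpa only [Ctx.cons_cons] using h i⟩⟩
  · rintro ⟨Xs, hα, h⟩
    obtain ⟨Δ₀, hΔ₀, rfl⟩ := Ctx.exists_cons_eq hα
    obtain ⟨hlen, h⟩ := List.forall₂_iff_get_cast.1 h
    exact tup hΔ₀ hlen fun i => by simpa only [Ctx.cons_cons] using h i

theorem prj_iff : HasType dA cA (.prj α k f) Γ Δ ↔ ∃ Xs, ∃ hk : k < Xs.length,
    Γ α = some (.prod Xs) ∧ HasType dA cA f (Γ.cons α (Xs.get ⟨k, hk⟩)) Δ := by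
  constructor
  · intro h
    cases h with
    | prj _ hk h => exact ⟨_, hk, Ctx.cons_apply_self, by rwa [Ctx.cons_cons]⟩
  · rintro ⟨Xs, hk, hα, h⟩
    obtain ⟨Γ₀, hΓ₀, rfl⟩ := Ctx.exists_cons_eq hα
    exact prj hΓ₀ hk (by rwa [Ctx.cons_cons] at h)

theorem inj_iff : HasType dA cA (.inj α k f) Γ Δ ↔ ∃ Xs, ∃ hk : k < Xs.length,
    Δ α = some (.sum Xs) ∧ HasType dA cA f Γ (Δ.cons α (Xs.get ⟨k, hk⟩)) := by
  constructor
  · intro h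
    cases h with
    | inj _ hk h => exact ⟨_, hk, Ctx.cons_apply_self, by rwa [Ctx.cons_cons]⟩
  · rintro ⟨Xs, hk, hα, h⟩
    obtain ⟨Δ₀, hΔ₀, rfl⟩ := Ctx.exists_cons_eq hα
    exact inj hΔ₀ hk (by rwa [Ctx.cons_cons] at h)


theorem cut_cot_left (h : HasType dA cA (.cut γ (.cot α fs) g) Γ Δ) :
    HasType dA cA (.cot α (fs.map fun f => .cut γ f g)) Γ Δ := by
  cases h with
  | cut h1 h2 h3 h4 hf hg =>
    obtain ⟨Xs, hα, hfs⟩ := cot_iff.1 hf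
    refine cot_iff.2 ⟨Xs, Ctx.union_apply_of_some hα, List.forall₂_map_left_iff.2 ?_⟩
    refine hfs.imp fun f X hfX => ?_
    rw [← Ctx.cons_union]
    exact cut (h1.cons_left (h1.right_eq_none hα)) h2 h3 h4 hfX hg

theorem cut_prj_left (h : HasType dA cA (.cut γ (.prj α k f) g) Γ Δ) :
    HasType dA cA (.prj α k (.cut γ f g)) Γ Δ := by
  cases h with
  | cut h1 h2 h3 h4 hf hg =>
    obtain ⟨Xs, hk, hα, hf⟩ := prj_iff.1 hf
    refine prj_iff.2 ⟨Xs, hk, Ctx.union_apply_of_some hα, ?_⟩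
    rw [← Ctx.cons_union]
    exact cut (h1.cons_left (h1.right_eq_none hα)) h2 h3 h4 hf hg

theorem cut_tup_left (hαγ : α ≠ γ) (h : HasType dA cA (.cut γ (.tup α fs) g) Γ Δ) :
    HasType dA cA (.tup α (fs.map fun f => .cut γ f g)) Γ Δ := by
  cases h with
  | cut h1 h2 h3 h4 hf hg =>
    obtain ⟨Xs, hα, hfs⟩ := tup_iff.1 hf
    rw [Ctx.cons_apply_of_ne hαγ] at hα
    refine tup_iff.2 ⟨Xs, Ctx.union_apply_of_some hα, List.forall₂_map_left_iff.2 ?_⟩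
    refine hfs.imp fun f X hfX => ?_
    rw [← Ctx.cons_union]
    rw [Ctx.cons_comm hαγ.symm] at hfX
    exact cut h1 (h2.cons_left (h2.right_eq_none hα)) (by simpa [hαγ.symm]) h4 hfX hg

theorem cut_inj_left (hαγ : α ≠ γ) (h : HasType dA cA (.cut γ (.inj α k f) g) Γ Δ) :
    HasType dA cA (.inj α k (.cut γ f g)) Γ Δ := by
  cases h with
  | cut h1 h2 h3 h4 hf hg =>
    obtain ⟨Xs, hk, hα, hf⟩ := inj_iff.1 hf
    rw [Ctx.cons_apply_of_ne hαγ] at hα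
    refine inj_iff.2 ⟨Xs, hk, Ctx.union_apply_of_some hα, ?_⟩
    rw [← Ctx.cons_union]
    rw [Ctx.cons_comm hαγ.symm] at hf
    exact cut h1 (h2.cons_left (h2.right_eq_none hα)) (by simpa [hαγ.symm]) h4 hf hg

theorem cut_tup_right (h : HasType dA cA (.cut γ f (.tup β gs)) Γ Δ) :
    HasType dA cA (.tup β (gs.map fun g => .cut γ f g)) Γ Δ := by
  cases h with
  | cut h1 h2 h3 h4 hf hg =>
    obtain ⟨Ys, hβ, hgs⟩ := tup_iff.1 hg
    have hβ' := h2.left_eq_none hβ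
    refine tup_iff.2 ⟨Ys, by rwa [Ctx.union_apply_of_none hβ'], List.forall₂_map_left_iff.2 ?_⟩
    refine hgs.imp fun g Y hgY => ?_
    rw [← Ctx.union_cons hβ']
    exact cut h1 (h2.cons_right hβ') h3 h4 hf hgY

theorem cut_inj_right (h : HasType dA cA (.cut γ f (.inj β k g)) Γ Δ) :
    HasType dA cA (.inj β k (.cut γ f g)) Γ Δ := by
  cases h with
  | cut h1 h2 h3 h4 hf hg =>
    obtain ⟨Ys, hk, hβ, hg⟩ := inj_iff.1 hg
    have hβ' := h2.left_eq_none hβ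
    refine inj_iff.2 ⟨Ys, hk, by rwa [Ctx.union_apply_of_none hβ'], ?_⟩
    rw [← Ctx.union_cons hβ']
    exact cut h1 (h2.cons_right hβ') h3 h4 hf hg

theorem cut_cot_right (hβγ : β ≠ γ) (h : HasType dA cA (.cut γ f (.cot β gs)) Γ Δ) :
    HasType dA cA (.cot β (gs.map fun g => .cut γ f g)) Γ Δ := by
  cases h with
  | cut h1 h2 h3 h4 hf hg =>
    obtain ⟨Ys, hβ, hgs⟩ := cot_iff.1 hg
    rw [Ctx.cons_apply_of_ne hβγ] at hβ
    have hβ' := h1.left_eq_none hβ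
    refine cot_iff.2 ⟨Ys, by rwa [Ctx.union_apply_of_none hβ'], List.forall₂_map_left_iff.2 ?_⟩
    refine hgs.imp fun g Y hgY => ?_
    rw [← Ctx.union_cons hβ']
    rw [Ctx.cons_comm hβγ.symm] at hgY
    exact cut (h1.cons_right hβ') h2 h3 (by simpa [hβγ.symm]) hf hgY

theorem cut_prj_right (hβγ : β ≠ γ) (h : HasType dA cA (.cut γ f (.prj β k g)) Γ Δ) :
    HasType dA cA (.prj β k (.cut γ f g)) Γ Δ := by
  cases h with
  | cut h1 h2 h3 h4 hf hg =>
    obtain ⟨Ys, hk, hβ, hg⟩ := prj_iff.1 hg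
    rw [Ctx.cons_apply_of_ne hβγ] at hβ
    have hβ' := h1.left_eq_none hβ
    refine prj_iff.2 ⟨Ys, hk, by rwa [Ctx.union_apply_of_none hβ'], ?_⟩
    rw [← Ctx.union_cons hβ']
    rw [Ctx.cons_comm hβγ.symm] at hg
    exact cut (h1.cons_right hβ') h2 h3 (by simpa [hβγ.symm]) hf hg

theorem cut_inj_cot (h : HasType dA cA (.cut γ (.inj γ k f) (.cot γ gs)) Γ Δ) :
    ∃ hk : k < gs.length, HasType dA cA (.cut γ f (gs.get ⟨k, hk⟩)) Γ Δ := by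
  cases h with
  | cut h1 h2 h3 h4 hf hg =>
    obtain ⟨Xs, hk, hZ, hf⟩ := inj_iff.1 hf
    obtain ⟨Ys, hZ', hgs⟩ := cot_iff.1 hg
    simp only [Ctx.cons_apply_self, Option.some.injEq] at hZ hZ'
    subst hZ
    obtain rfl := Formula.sum.inj hZ'
    have hk' : k < gs.length := hgs.length_eq ▸ hk
    rw [Ctx.cons_cons] at hf
    have hg := hgs.get hk' hk
    rw [Ctx.cons_cons] at hg
    exact ⟨hk', cut h1 h2 h3 h4 hf hg⟩

theorem cut_tup_prj (h : HasType dA cA (.cut γ (.tup γ fs) (.prj γ k g)) Γ Δ) :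
    ∃ hk : k < fs.length, HasType dA cA (.cut γ (fs.get ⟨k, hk⟩) g) Γ Δ := by
  cases h with
  | cut h1 h2 h3 h4 hf hg =>
    obtain ⟨Xs, hZ, hfs⟩ := tup_iff.1 hf
    obtain ⟨Ys, hk, hZ', hg⟩ := prj_iff.1 hg
    simp only [Ctx.cons_apply_self, Option.some.injEq] at hZ hZ'
    subst hZ
    obtain rfl := Formula.prod.inj hZ'
    have hk' : k < fs.length := hfs.length_eq ▸ hk
    rw [Ctx.cons_cons] at hg
    have hf := hfs.get hk' hk
    rw [Ctx.cons_cons] at hf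
    exact ⟨hk', cut h1 h2 h3 h4 hf hg⟩

end HasType

def Ctx.AllAtoms (Γ : Ctx Chan At) : Prop := ∀ c X, Γ c = some X → ∃ A, X = .atom A

namespace Ctx.AllAtoms

variable {Γ Γ' : Ctx Chan At}

theorem single (α : Chan) (A : At) : (Ctx.single α (.atom A)).AllAtoms := by
  intro c X h
  simp only [Ctx.single] at h
  split_ifs at h
  exact ⟨A, (Option.some.inj h).symm⟩

omit [DecidableEq Chan] in
theorem union (h : Γ.AllAtoms) (h' : Γ'.AllAtoms) : (Γ.union Γ').AllAtoms := by
  intro c X hc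
  cases hΓ : Γ c with
  | none => exact h' c X (by rwa [Ctx.union_apply_of_none hΓ] at hc)
  | some Y => rw [Ctx.union_apply_of_some hΓ] at hc; exact h c X (hc ▸ hΓ)

theorem of_cons {α : Chan} {Z : Formula At} (h : (Γ.cons α Z).AllAtoms) (hα : Γ α = none) :
    Γ.AllAtoms := by
  intro c X hc
  exact h c X (by rwa [Ctx.cons_apply_of_ne (by rintro rfl; simp_all)])

end Ctx.AllAtoms

theorem Atomic.allAtoms {dA cA : Ax → Ctx Chan At} (hdA : ∀ a, (dA a).AllAtoms)
    (hcA : ∀ a, (cA a).AllAtoms) {t : Tm Ax Chan} {Γ Δ : Ctx Chan At} (hA : Atomic t)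
    (ht : HasType dA cA t Γ Δ) : Γ.AllAtoms ∧ Δ.AllAtoms := by
  induction hA generalizing Γ Δ with
  | id α β => cases ht with | id _ _ A => exact ⟨.single α A, .single β A⟩
  | ax a => cases ht; exact ⟨hdA a, hcA a⟩
  | cut γ _ _ ihf ihg =>
    cases ht with
    | cut _ _ h3 h4 hf hg =>
      exact ⟨(ihf hf).1.union ((ihg hg).1.of_cons h4), ((ihf hf).2.of_cons h3).union (ihg hg).2⟩

theorem _root_.List.Forall₂.forall_or_exists_step {α β : Type*} {P : α → Prop}
    {S : α → α → Prop} {T : α → β → Prop} {as : List α} {bs : List β}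
    (h : List.Forall₂ (fun a b => T a b ∧ (P a ∨ ∃ a', S a a' ∧ T a' b)) as bs) :
    (∀ a ∈ as, P a) ∨
      ∃ l a a' r, as = l ++ a :: r ∧ S a a' ∧ List.Forall₂ T (l ++ a' :: r) bs := by
  induction h with
  | nil => exact .inl fun _ h => absurd h List.not_mem_nil
  | @cons a b as bs hab htail ih =>
    obtain ⟨hT, hP | ⟨a', hS, hT'⟩⟩ := hab
    · rcases ih with hall | ⟨l, c, c', r, rfl, hS, hT''⟩
      · exact .inl (List.forall_mem_cons.2 ⟨hP, hall⟩)
      · exact .inr ⟨a :: l, c, c', r, rfl, hS, .cons hT hT''⟩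
    · exact .inr ⟨[], a, a', as, rfl, hS, .cons hT' (htail.imp fun _ _ => And.left)⟩

def HasTypedReduct (dA cA : Ax → Ctx Chan At) (t : Tm Ax Chan) (Γ Δ : Ctx Chan At) : Prop :=
  ∃ t', Red t t' ∧ HasType dA cA t' Γ Δ

section Progress

variable {dA cA : Ax → Ctx Chan At} {Γ Δ : Ctx Chan At} {γ : Chan} {f g : Tm Ax Chan}

theorem cut_left_principal_or_reduces (ht : HasType dA cA (.cut γ f g) Γ Δ)
    (hf : OnlyEssentialCuts f) :
    (Atomic f ∨ (∃ fs, f = .tup γ fs) ∨ ∃ k f', f = .inj γ k f') ∨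
      HasTypedReduct dA cA (.cut γ f g) Γ Δ := by
  cases hf with
  | id α β => exact .inl (.inl (.id α β))
  | ax a => exact .inl (.inl (.ax a))
  | cut δ ha hb => exact .inl (.inl (.cut δ ha hb))
  | cot α _ => exact .inr ⟨_, .r3 .., ht.cut_cot_left⟩
  | prj α k _ => exact .inr ⟨_, .r7 .., ht.cut_prj_left⟩
  | @tup α fs _ =>
    obtain rfl | hαγ := eq_or_ne α γ
    · exact .inl (.inr (.inl ⟨fs, rfl⟩))
    · exact .inr ⟨_, .r9 _ _ _ _ hαγ, ht.cut_tup_left hαγ⟩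
  | @inj α k f' _ =>
    obtain rfl | hαγ := eq_or_ne α γ
    · exact .inl (.inr (.inr ⟨k, f', rfl⟩))
    · exact .inr ⟨_, .r5 _ _ _ _ _ hαγ, ht.cut_inj_left hαγ⟩

theorem cut_right_principal_or_reduces (ht : HasType dA cA (.cut γ f g) Γ Δ)
    (hg : OnlyEssentialCuts g) :
    (Atomic g ∨ (∃ gs, g = .cot γ gs) ∨ ∃ k g', g = .prj γ k g') ∨
      HasTypedReduct dA cA (.cut γ f g) Γ Δ := by
  cases hg with
  | id α β => exact .inl (.inl (.id α β))
  | ax a => exact .inl (.inl (.ax a))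
  | cut δ ha hb => exact .inl (.inl (.cut δ ha hb))
  | tup β _ => exact .inr ⟨_, .r4 .., ht.cut_tup_right⟩
  | inj β k _ => exact .inr ⟨_, .r8 .., ht.cut_inj_right⟩
  | @cot β gs _ =>
    obtain rfl | hβγ := eq_or_ne β γ
    · exact .inl (.inr (.inl ⟨gs, rfl⟩))
    · exact .inr ⟨_, .r10 _ _ _ _ hβγ, ht.cut_cot_right hβγ⟩
  | @prj β k g' _ =>
    obtain rfl | hβγ := eq_or_ne β γ
    · exact .inl (.inr (.inr ⟨k, g', rfl⟩))
    · exact .inr ⟨_, .r6 _ _ _ _ _ hβγ, ht.cut_prj_right hβγ⟩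

theorem cut_essential_or_reduces_of_principal (hdA : ∀ a, (dA a).AllAtoms) (hcA : ∀ a, (cA a).AllAtoms)
    (ht : HasType dA cA (.cut γ f g) Γ Δ)
    (hf : Atomic f ∨ (∃ fs, f = .tup γ fs) ∨ ∃ k f', f = .inj γ k f')
    (hg : Atomic g ∨ (∃ gs, g = .cot γ gs) ∨ ∃ k g', g = .prj γ k g') :
    OnlyEssentialCuts (.cut γ f g) ∨ HasTypedReduct dA cA (.cut γ f g) Γ Δ := by
  have hZ : ∃ (Γ₁ Δ₁ Γ₂ Δ₂ : Ctx Chan At) (Z : Formula At), HasType dA cA f Γ₁ (Δ₁.cons γ Z) ∧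
      HasType dA cA g (Γ₂.cons γ Z) Δ₂ := by
    cases ht with | cut _ _ _ _ hf hg => exact ⟨_, _, _, _, _, hf, hg⟩
  obtain ⟨Γ₁, Δ₁, Γ₂, Δ₂, Z, hfZ, hgZ⟩ := hZ
  rcases hf with hfa | ⟨fs, rfl⟩ | ⟨k, f', rfl⟩ <;>
    rcases hg with hga | ⟨gs, rfl⟩ | ⟨l, g', rfl⟩
  · exact .inl (.cut γ hfa hga)
  · obtain ⟨A, rfl⟩ := (hfa.allAtoms hdA hcA hfZ).2 γ Z Ctx.cons_apply_self
    obtain ⟨_, h, -⟩ := HasType.cot_iff.1 hgZ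
    simp at h
  · obtain ⟨A, rfl⟩ := (hfa.allAtoms hdA hcA hfZ).2 γ Z Ctx.cons_apply_self
    obtain ⟨_, _, h, -⟩ := HasType.prj_iff.1 hgZ
    simp at h
  · obtain ⟨A, rfl⟩ := (hga.allAtoms hdA hcA hgZ).1 γ Z Ctx.cons_apply_self
    obtain ⟨_, h, -⟩ := HasType.tup_iff.1 hfZ
    simp at h
  · obtain ⟨_, h, -⟩ := HasType.tup_iff.1 hfZ
    obtain ⟨_, h', -⟩ := HasType.cot_iff.1 hgZ
    simp_all
  · obtain ⟨hk, ht'⟩ := ht.cut_tup_prj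
    exact .inr ⟨_, .r12 γ l fs g' hk, ht'⟩
  · obtain ⟨A, rfl⟩ := (hga.allAtoms hdA hcA hgZ).1 γ Z Ctx.cons_apply_self
    obtain ⟨_, _, h, -⟩ := HasType.inj_iff.1 hfZ
    simp at h
  · obtain ⟨hk, ht'⟩ := ht.cut_inj_cot
    exact .inr ⟨_, .r11 γ k f' gs hk, ht'⟩
  · obtain ⟨_, _, h, -⟩ := HasType.inj_iff.1 hfZ
    obtain ⟨_, _, h', -⟩ := HasType.prj_iff.1 hgZ
    simp_all

theorem cut_onlyEssentialCuts_or_reduces (hdA : ∀ a, (dA a).AllAtoms)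
    (hcA : ∀ a, (cA a).AllAtoms) (ht : HasType dA cA (.cut γ f g) Γ Δ)
    (hf : OnlyEssentialCuts f) (hg : OnlyEssentialCuts g) :
    OnlyEssentialCuts (.cut γ f g) ∨ HasTypedReduct dA cA (.cut γ f g) Γ Δ := by
  rcases cut_left_principal_or_reduces ht hf with hf' | hred
  · rcases cut_right_principal_or_reduces ht hg with hg' | hred
    · exact cut_essential_or_reduces_of_principal hdA hcA ht hf' hg'
    · exact .inr hred
  · exact .inr hred

theorem HasType.onlyEssentialCuts_or_reduces (hdA : ∀ a, (dA a).AllAtoms)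
    (hcA : ∀ a, (cA a).AllAtoms) {t : Tm Ax Chan} (ht : HasType dA cA t Γ Δ) :
    OnlyEssentialCuts t ∨ HasTypedReduct dA cA t Γ Δ := by
  induction ht with
  | id α β => exact .inl (.id α β)
  | ax a => exact .inl (.ax a)
  | @cot Γ Δ α Xs fs hα hlen hfs ih =>
    have h : List.Forall₂ (fun f X => HasType dA cA f (Γ.cons α X) Δ ∧ (OnlyEssentialCuts f ∨
        ∃ f', Red f f' ∧ HasType dA cA f' (Γ.cons α X) Δ)) fs Xs :=
      List.forall₂_iff_get_cast.2 ⟨hlen, fun i => ⟨hfs i, ih i⟩⟩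
    rcases h.forall_or_exists_step with hall | ⟨l, f, f', r, rfl, hr, hT⟩
    · exact .inl (.cot α hall)
    · obtain ⟨hlen', hT⟩ := List.forall₂_iff_get_cast.1 hT
      exact .inr ⟨_, .cotC α l r hr, .cot hα hlen' hT⟩
  | @tup Γ Δ α Xs fs hα hlen hfs ih =>
    have h : List.Forall₂ (fun f X => HasType dA cA f Γ (Δ.cons α X) ∧ (OnlyEssentialCuts f ∨
        ∃ f', Red f f' ∧ HasType dA cA f' Γ (Δ.cons α X))) fs Xs :=
      List.forall₂_iff_get_cast.2 ⟨hlen, fun i => ⟨hfs i, ih i⟩⟩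
    rcases h.forall_or_exists_step with hall | ⟨l, f, f', r, rfl, hr, hT⟩
    · exact .inl (.tup α hall)
    · obtain ⟨hlen', hT⟩ := List.forall₂_iff_get_cast.1 hT
      exact .inr ⟨_, .tupC α l r hr, .tup hα hlen' hT⟩
  | prj hα hk _ ih =>
    rcases ih with h | ⟨f', hr, hf'⟩
    · exact .inl (.prj _ _ h)
    · exact .inr ⟨_, .prjC _ _ hr, .prj hα hk hf'⟩
  | inj hα hk _ ih =>
    rcases ih with h | ⟨f', hr, hf'⟩
    · exact .inl (.inj _ _ h)
    · exact .inr ⟨_, .injC _ _ hr, .inj hα hk hf'⟩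
  | cut h1 h2 h3 h4 hf hg ihf ihg =>
    rcases ihf with hf' | ⟨f', hr, hf''⟩
    · rcases ihg with hg' | ⟨g', hr, hg''⟩
      · exact cut_onlyEssentialCuts_or_reduces hdA hcA (.cut h1 h2 h3 h4 hf hg) hf' hg'
      · exact .inr ⟨_, .cutR _ _ hr, .cut h1 h2 h3 h4 hf hg''⟩
    · exact .inr ⟨_, .cutL _ _ hr, .cut h1 h2 h3 h4 hf'' hg⟩

theorem HasType.exists_onlyEssentialCuts (hdA : ∀ a, (dA a).AllAtoms)
    (hcA : ∀ a, (cA a).AllAtoms) {t : Tm Ax Chan} (ht : HasType dA cA t Γ Δ) :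
    ∃ t', Relation.ReflTransGen Red t t' ∧ OnlyEssentialCuts t' := by
  induction Red.wellFounded_flip.apply t with
  | intro t _ ih =>
    rcases ht.onlyEssentialCuts_or_reduces hdA hcA with h | ⟨t₁, hr, ht₁⟩
    · exact ⟨t, .refl, h⟩
    · obtain ⟨t', hr', h'⟩ := ih t₁ hr ht₁
      exact ⟨t', .head hr hr', h'⟩

end Progress

theorem cutElimination (dA cA : Ax → Ctx Chan At)
    (hdA : ∀ a c X, dA a c = some X → ∃ A, X = Formula.atom A)
    (hcA : ∀ a c X, cA a c = some X → ∃ A, X = Formula.atom A) :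
    (∀ t : Tm Ax Chan, (∃ Γ Δ, HasType dA cA t Γ Δ) → Acc (fun a b : Tm Ax Chan => Red b a) t) ∧
    (∀ (t : Tm Ax Chan) (Γ Δ : Ctx Chan At), HasType dA cA t Γ Δ →
      ∃ t', Relation.ReflTransGen Red t t' ∧ OnlyEssentialCuts t') :=
  ⟨fun t _ => Red.wellFounded_flip.apply t, fun _ _ _ ht => ht.exists_onlyEssentialCuts hdA hcA⟩

end Stmt2
end
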